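/- arXiv:2004.00796 — 5 statements merged into one kernel-verified Lean document; each statement's English description precedes it below -/
import Mathlib

section
/- Let n be a positive natural number and let π : (Fin n → ℝ) → ℝ be nonnegative and MTP2, i.e., π(x)·π(y) ≤ π(x ⊓ y)·π(x ⊔ y) for all x, y, where ⊓ and ⊔ denote componentwise minimum and maximum. Let w : (Fin n → ℝ) → ℝ be nonnegative and monotone increasing with respect to the componentwise order. Then π ≤_lr π·w in the multivariate likelihood ratio order: for all x, y, π(x)·π(y)·w(y) ≤ π(x ⊓ y)·π(x ⊔ y)·w(x ⊔ y). -/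
theorem mtp2_weighted_lr_order_general (n : ℕ)
    (pr w : (Fin n → ℝ) → ℝ)
    (hpr : ∀ x, 0 ≤ pr x)
    (hmtp2 : ∀ x y, pr x * pr y ≤ pr (x ⊓ y) * pr (x ⊔ y))
    (hw0 : ∀ x, 0 ≤ w x) (hw : Monotone w) :
    ∀ x y, pr x * pr y * w y ≤ pr (x ⊓ y) * pr (x ⊔ y) * w (x ⊔ y) :=
  fun x y => mul_le_mul (hmtp2 x y) (hw le_sup_right) (hw0 y) (mul_nonneg (hpr _) (hpr _))

theorem mtp2_weighted_lr_order (n : ℕ) (hn : 0 < n)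
    (pr w : (Fin n → ℝ) → ℝ)
    (hpr : ∀ x, 0 ≤ pr x)
    (hmtp2 : ∀ x y, pr x * pr y ≤ pr (x ⊓ y) * pr (x ⊔ y))
    (hw0 : ∀ x, 0 ≤ w x) (hw : Monotone w) :
    ∀ x y, pr x * pr y * w y ≤ pr (x ⊓ y) * pr (x ⊔ y) * w (x ⊔ y) :=
  mtp2_weighted_lr_order_general n pr w hpr hmtp2 hw0 hw
end

section
/- Let n, m be positive natural numbers, let π : (Fin n → ℝ) → ℝ be nonnegative and MTP2 (π(x)·π(y) ≤ π(x ⊓ y)·π(x ⊔ y) for all x, y, with ⊓, ⊔ componentwise min and max), and let h_k : (Fin n → ℝ) → ℝ for k ∈ Fin m each be monotone increasing with respect to the componentwise order. For t : Fin m → ℝ define π_t(θ) := π(θ)·exp(∑ k, h_k(θ)·t k). Then for every t with t k ≥ 0 for all k: (i) π ≤_lr π_t, i.e., π(x)·π_t(y) ≤ π(x ⊓ y)·π_t(x ⊔ y) for all x, y; and (ii) π_{−t} ≤_lr π, i.e., π_{−t}(x)·π(y) ≤ π_{−t}(x ⊓ y)·π(x ⊔ y) for all x, y. Thus t = ε and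 t = −ε correspond to the upper and lower bounds of the class. -/
/-! Tilting an MTP2 density by a nonnegative increasing weight can only move mass up the lattice:
multiplying the MTP2 inequality `π x π y ≤ π (x ⊓ y) π (x ⊔ y)` by `w y ≤ w (x ⊔ y)` gives
`π ≤_lr π w`, and dually `π w ≤_lr π` for a decreasing weight. The ABC tilt
`exp (∑ k, h_k t_k)` is increasing for `t ≥ 0` and decreasing at `-t`. -/

open Real

/-- `p ≤_lr q`; a density `p` is MTP2 iff `LikelihoodRatioLE p p`. -/
def LikelihoodRatioLE {α : Type*} [Lattice α] (p q : α → ℝ) : Prop :=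
  ∀ x y, p x * q y ≤ p (x ⊓ y) * q (x ⊔ y)

namespace LikelihoodRatioLE

variable {α : Type*} [Lattice α] {p w : α → ℝ}

theorem mul_right_of_monotone (hp : 0 ≤ p) (hmtp : LikelihoodRatioLE p p) (hw : Monotone w)
    (hw0 : 0 ≤ w) : LikelihoodRatioLE p (p * w) := fun x y =>
  calc p x * (p y * w y) = p x * p y * w y := by ring
    _ ≤ p (x ⊓ y) * p (x ⊔ y) * w (x ⊔ y) :=
      mul_le_mul (hmtp x y) (hw le_sup_right) (hw0 y) (mul_nonneg (hp _) (hp _))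
    _ = p (x ⊓ y) * (p (x ⊔ y) * w (x ⊔ y)) := by ring

theorem mul_left_of_antitone (hp : 0 ≤ p) (hmtp : LikelihoodRatioLE p p) (hw : Antitone w)
    (hw0 : 0 ≤ w) : LikelihoodRatioLE (p * w) p := fun x y =>
  calc p x * w x * p y = p x * p y * w x := by ring
    _ ≤ p (x ⊓ y) * p (x ⊔ y) * w (x ⊓ y) :=
      mul_le_mul (hmtp x y) (hw inf_le_left) (hw0 x) (mul_nonneg (hp _) (hp _))
    _ = p (x ⊓ y) * w (x ⊓ y) * p (x ⊔ y) := by ring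

end LikelihoodRatioLE

section Tilt

variable {ι β : Type*} [Fintype ι] [Preorder β] {h : ι → β → ℝ} {t : ι → ℝ}

theorem monotone_exp_sum_mul (hh : ∀ k, Monotone (h k)) (ht : ∀ k, 0 ≤ t k) :
    Monotone fun θ => exp (∑ k, h k θ * t k) := fun _ _ hθ =>
  exp_monotone <| Finset.sum_le_sum fun k _ => (hh k).mul_const (ht k) hθ

theorem antitone_exp_sum_mul_neg (hh : ∀ k, Monotone (h k)) (ht : ∀ k, 0 ≤ t k) :
    Antitone fun θ => exp (∑ k, h k θ * (-t) k) := fun _ _ hθ =>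
  exp_monotone <| Finset.sum_le_sum fun k _ =>
    (hh k).mul_const_of_nonpos (neg_nonpos.mpr (ht k)) hθ

end Tilt

theorem multivariate_abc_priors_lr_order_general (n m : ℕ)
    (pr : (Fin n → ℝ) → ℝ) (hpr : ∀ x, 0 ≤ pr x)
    (hmtp2 : ∀ x y, pr x * pr y ≤ pr (x ⊓ y) * pr (x ⊔ y))
    (h : Fin m → (Fin n → ℝ) → ℝ) (hmono : ∀ k, Monotone (h k))
    (pit : (Fin m → ℝ) → (Fin n → ℝ) → ℝ)
    (hdef : ∀ t θ, pit t θ = pr θ * Real.exp (∑ k, h k θ * t k))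
    (t : Fin m → ℝ) (ht : ∀ k, 0 ≤ t k) :
    (∀ x y, pr x * pit t y ≤ pr (x ⊓ y) * pit t (x ⊔ y)) ∧
    (∀ x y, pit (-t) x * pr y ≤ pit (-t) (x ⊓ y) * pr (x ⊔ y)) := by
  have hpit : ∀ s, pit s = pr * fun θ => exp (∑ k, h k θ * s k) := fun s => funext (hdef s)
  have htilt_nonneg : ∀ s : Fin m → ℝ, 0 ≤ fun θ => exp (∑ k, h k θ * s k) :=
    fun _ _ => (exp_pos _).le
  rw [hpit, hpit]
  exact ⟨LikelihoodRatioLE.mul_right_of_monotone hpr hmtp2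
      (monotone_exp_sum_mul hmono ht) (htilt_nonneg t),
    LikelihoodRatioLE.mul_left_of_antitone hpr hmtp2
      (antitone_exp_sum_mul_neg hmono ht) (htilt_nonneg (-t))⟩

theorem multivariate_abc_priors_lr_order (n m : ℕ) (hn : 0 < n) (hm : 0 < m)
    (pr : (Fin n → ℝ) → ℝ) (hpr : ∀ x, 0 ≤ pr x)
    (hmtp2 : ∀ x y, pr x * pr y ≤ pr (x ⊓ y) * pr (x ⊔ y))
    (h : Fin m → (Fin n → ℝ) → ℝ) (hmono : ∀ k, Monotone (h k))
    (pit : (Fin m → ℝ) → (Fin n → ℝ) → ℝ)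
    (hdef : ∀ t θ, pit t θ = pr θ * Real.exp (∑ k, h k θ * t k))
    (t : Fin m → ℝ) (ht : ∀ k, 0 ≤ t k) :
    (∀ x y, pr x * pit t y ≤ pr (x ⊓ y) * pit t (x ⊔ y)) ∧
    (∀ x y, pit (-t) x * pr y ≤ pit (-t) (x ⊓ y) * pr (x ⊔ y)) :=
  multivariate_abc_priors_lr_order_general n m pr hpr hmtp2 h hmono pit hdef t ht
end

section
/- Let Θ and X be types, let A, C : Θ → ℝ with A(θ) > 0 for all θ, B : X → ℝ, S : X → ℝ, and define the exponential family likelihood f(x, θ) := A(θ)·B(x)·exp(C(θ)·S(x)) and, for real hyper-parameters k, l, the conjugate prior kernel π_{k,l}(θ) := (A θ) ^ k · exp(C(θ)·l) (real power). Then for any two data points x⁰, x' ∈ X, setting ε := S(x') − S(x⁰), the identity B(x⁰) · π_{k,l}(θ) · f(x', θ) = B(x') · π_{k,l+ε}(θ) · f(x⁰, θ) holds for every θ. -/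
open Real

lemma exp_mul_add_shift (c l s₀ s : ℝ) :
    exp (c * l) * exp (c * s) = exp (c * (l + (s - s₀))) * exp (c * s₀) := by
  rw [← exp_add, ← exp_add]
  ring_nf

theorem exponential_family_conjugate_duality_general
    (Θ X : Type*) (A C : Θ → ℝ)
    (B : X → ℝ) (S : X → ℝ)
    (f : X → Θ → ℝ) (hf : ∀ x θ, f x θ = A θ * B x * Real.exp (C θ * S x))
    (prior : ℝ → ℝ → Θ → ℝ)
    (hprior : ∀ k l θ, prior k l θ = (A θ) ^ k * Real.exp (C θ * l))
    (k l : ℝ) (x0 x' : X) :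
    ∀ θ, B x0 * (prior k l θ * f x' θ) =
      B x' * (prior k (l + (S x' - S x0)) θ * f x0 θ) := by
  intro θ
  simp only [hf, hprior]
  linear_combination (B x0 * A θ ^ k * A θ * B x') * exp_mul_add_shift (C θ) l (S x0) (S x')

theorem exponential_family_conjugate_duality
    (Θ X : Type*) (A C : Θ → ℝ) (hA : ∀ θ, 0 < A θ)
    (B : X → ℝ) (S : X → ℝ)
    (f : X → Θ → ℝ) (hf : ∀ x θ, f x θ = A θ * B x * Real.exp (C θ * S x))
    (prior : ℝ → ℝ → Θ → ℝ)
    (hprior : ∀ k l θ, prior k l θ = (A θ) ^ k * Real.exp (C θ * l))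
    (k l : ℝ) (x0 x' : X) :
    ∀ θ, B x0 * (prior k l θ * f x' θ) =
      B x' * (prior k (l + (S x' - S x0)) θ * f x0 θ) :=
  exponential_family_conjugate_duality_general Θ X A C B S f hf prior hprior k l x0 x'
end

section
/- Let σ, s, n be positive reals and m, x̄, ε real. Define s'² by 1/s'² = 1/s² + n/σ², w₁ := s'²/s², w₂ := n·s'²/σ². Then there exists a constant c > 0 such that for all μ ∈ ℝ: exp(−(μ − m)²/(2s²)) · exp(−n·(μ − (x̄ + ε))²/(2σ²)) = c · exp(−(μ − (m + (w₂/w₁)·ε))²/(2s²)) · exp(−n·(μ − x̄)²/(2σ²)). Moreover, if s² = σ²/n then w₂/w₁ = 1. -/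
/-!
Shifting the data mean by `ε` changes the log-likelihood `-n (μ - x̄)² / (2σ²)` by a term that is
affine in `μ` with slope `n ε / σ²`; shifting the prior mean by `k ε` changes the log-prior by an
affine term with slope `k ε / s²`. For `k = n s² / σ² = w₂ / w₁` the slopes agree, so the two
prior-times-likelihood kernels differ by a factor independent of `μ`.
-/

open Real

theorem weight_ratio_eq {n a b t : ℝ} (ht : t ≠ 0) : (n * t / b) / (t / a) = n * a / b := by
  rw [div_div_div_eq, mul_right_comm n t a, mul_div_mul_right _ _ ht]

theorem prior_likelihood_exponent_shift (a b n m x ε μ : ℝ) (ha : a ≠ 0) (hb : b ≠ 0) :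
    (-(μ - m) ^ 2 / (2 * a) + -n * (μ - (x + ε)) ^ 2 / (2 * b)) -
        (-(μ - (m + n * a / b * ε)) ^ 2 / (2 * a) + -n * (μ - x) ^ 2 / (2 * b)) =
      n * ε / b * (m - x + (n * a / b - 1) * ε / 2) := by
  field_simp
  ring

theorem normal_conjugate_duality (σ s n : ℝ) (hσ : 0 < σ) (hs : 0 < s) (hn : 0 < n)
    (m xbar ε : ℝ) (s' w₁ w₂ : ℝ)
    (hs' : 1 / s' ^ 2 = 1 / s ^ 2 + n / σ ^ 2)
    (hw1 : w₁ = s' ^ 2 / s ^ 2) (hw2 : w₂ = n * s' ^ 2 / σ ^ 2) :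
    (∃ c : ℝ, 0 < c ∧ ∀ μ : ℝ,
      Real.exp (-(μ - m) ^ 2 / (2 * s ^ 2)) *
          Real.exp (-n * (μ - (xbar + ε)) ^ 2 / (2 * σ ^ 2)) =
        c * (Real.exp (-(μ - (m + (w₂ / w₁) * ε)) ^ 2 / (2 * s ^ 2)) *
          Real.exp (-n * (μ - xbar) ^ 2 / (2 * σ ^ 2)))) ∧
    (s ^ 2 = σ ^ 2 / n → w₂ / w₁ = 1) := by
  have hs'_sq : s' ^ 2 ≠ 0 :=
    (one_div_pos.mp (hs' ▸ by positivity : (0 : ℝ) < 1 / s' ^ 2)).ne'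
  have hk : w₂ / w₁ = n * s ^ 2 / σ ^ 2 := hw1 ▸ hw2 ▸ weight_ratio_eq hs'_sq
  refine ⟨⟨exp (n * ε / σ ^ 2 * (m - xbar + (n * s ^ 2 / σ ^ 2 - 1) * ε / 2)), exp_pos _,
    fun μ => ?_⟩, fun h => ?_⟩
  · rw [← exp_add, ← exp_add, ← exp_add, hk, ← prior_likelihood_exponent_shift _ _ _ _ _ _ _
      (by positivity) (by positivity), sub_add_cancel]
  · rw [hk, h, mul_div_assoc', mul_div_cancel_left₀ _ hn.ne', div_self (by positivity)]
end

section
/- Let π : ℝ → ℝ be a measurable nonnegative probability density with respect to Lebesgue measure (∫ π = 1), let h : ℝ → ℝ be measurable, and let ε > 0 be such that ∫ π(θ)·exp(ε·|h(θ)|) dθ < ∞. For t ∈ [−ε, ε] define Z(t) := ∫ π(θ)·exp(h(θ)·t) dθ and π_t(θ) := π(θ)·exp(h(θ)·t)/Z(t), and define the Kolmogorov distance K(t) := ⨆ τ : ℝ, |∫_{(−∞, τ]} π(θ) dθ − ∫_{(−∞, τ]} π_t(θ) dθ|. Then K(t) → 0 as t → 0 (limit along t in [−ε, ε]). -/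
/-!
The Kolmogorov distance between two densities is at most their `L¹` distance, and normalising a
nonnegative function `g` against a probability density `f` at most doubles `‖f - g‖₁`. So it
suffices that `∫ π |1 - exp (h t)| → 0` as `t → 0`, which is dominated convergence with the
integrable majorant `π exp (ε |h|)`, since `|1 - exp x| ≤ exp |x|`.
-/

open MeasureTheory Filter Topology

lemma Real.abs_one_sub_exp_le_exp_abs (x : ℝ) : |1 - Real.exp x| ≤ Real.exp |x| := by
  rw [abs_le]
  constructor
  · linarith [Real.exp_le_exp.mpr (le_abs_self x)]
  · linarith [Real.exp_pos x, Real.one_le_exp (abs_nonneg x)]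

lemma abs_mul_le_mul_abs_of_abs_le {y t ε : ℝ} (ht : |t| ≤ ε) : |y * t| ≤ ε * |y| := by
  rw [abs_mul, mul_comm]
  gcongr

section L1

variable {α : Type*} [MeasurableSpace α] {μ : Measure α} {f g : α → ℝ}

lemma abs_setIntegral_sub_le_integral_abs_sub (hf : Integrable f μ) (hg : Integrable g μ)
    (s : Set α) : |∫ x in s, f x ∂μ - ∫ x in s, g x ∂μ| ≤ ∫ x, |f x - g x| ∂μ := by
  rw [← integral_sub hf.integrableOn hg.integrableOn]
  calc |∫ x in s, (f x - g x) ∂μ| ≤ ∫ x in s, |f x - g x| ∂μ := abs_integral_le_integral_abs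
    _ ≤ ∫ x, |f x - g x| ∂μ :=
      setIntegral_le_integral (hf.sub hg).abs (.of_forall fun _ => abs_nonneg _)

lemma iSup_abs_setIntegral_sub_le_integral_abs_sub {ι : Type*} (hf : Integrable f μ)
    (hg : Integrable g μ) (s : ι → Set α) :
    ⨆ i, |∫ x in s i, f x ∂μ - ∫ x in s i, g x ∂μ| ≤ ∫ x, |f x - g x| ∂μ :=
  Real.iSup_le (fun i => abs_setIntegral_sub_le_integral_abs_sub hf hg (s i))
    (integral_nonneg fun _ => abs_nonneg _)

/-- Normalising `g` moves it by `|∫ g - 1| = |∫ (g - f)| ≤ ‖f - g‖₁`. -/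
lemma integral_abs_sub_div_integral_le (hf : Integrable f μ) (hg : Integrable g μ) (hg0 : 0 ≤ g)
    (hf1 : ∫ x, f x ∂μ = 1) (hZ : 0 < ∫ x, g x ∂μ) :
    ∫ x, |f x - g x / ∫ y, g y ∂μ| ∂μ ≤ 2 * ∫ x, |f x - g x| ∂μ := by
  set Z := ∫ y, g y ∂μ
  have hpointwise : ∀ x, |f x - g x / Z| ≤ |f x - g x| + |Z - 1| / Z * g x := by
    intro x
    have hsplit : |g x - g x / Z| = |Z - 1| / Z * g x := by
      rw [show g x - g x / Z = (Z - 1) / Z * g x by field_simp, abs_mul, abs_div,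
        abs_of_pos hZ, abs_of_nonneg (hg0 x)]
    calc |f x - g x / Z| ≤ |f x - g x| + |g x - g x / Z| := abs_sub_le _ _ _
      _ = |f x - g x| + |Z - 1| / Z * g x := by rw [hsplit]
  have hZ1 : |Z - 1| ≤ ∫ x, |f x - g x| ∂μ := by
    rw [← hf1, ← integral_sub hg hf]
    exact abs_integral_le_integral_abs.trans_eq (by simp_rw [abs_sub_comm])
  have hfg : Integrable (fun x => |f x - g x|) μ := (hf.sub hg).abs
  calc ∫ x, |f x - g x / Z| ∂μ ≤ ∫ x, (|f x - g x| + |Z - 1| / Z * g x) ∂μ :=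
        integral_mono (hf.sub (hg.div_const Z)).abs (hfg.add (hg.const_mul _))
          hpointwise
    _ = ∫ x, |f x - g x| ∂μ + |Z - 1| := by
        rw [integral_add hfg (hg.const_mul _), integral_const_mul,
          div_mul_cancel₀ _ hZ.ne']
    _ ≤ 2 * ∫ x, |f x - g x| ∂μ := by linarith

end L1

section Tilting

variable {α : Type*} [MeasurableSpace α] {μ : Measure α} {f u : α → ℝ} {ε t : ℝ}

lemma integral_mul_exp_pos {v : α → ℝ} (hf0 : 0 ≤ f) (hf : 0 < ∫ x, f x ∂μ)
    (hg : Integrable (fun x => f x * Real.exp (v x)) μ) :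
    0 < ∫ x, f x * Real.exp (v x) ∂μ := by
  rw [integral_pos_iff_support_of_nonneg hf0 (Integrable.of_integral_ne_zero hf.ne')] at hf
  rw [integral_pos_iff_support_of_nonneg (fun x => mul_nonneg (hf0 x) (Real.exp_nonneg _)) hg]
  simpa [Function.support, Real.exp_ne_zero] using hf

lemma integrable_mul_exp_mul (hf : AEStronglyMeasurable f μ) (hu : AEStronglyMeasurable u μ)
    (hf0 : 0 ≤ f) (hint : Integrable (fun x => f x * Real.exp (ε * |u x|)) μ) (ht : |t| ≤ ε) :
    Integrable (fun x => f x * Real.exp (u x * t)) μ := by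
  refine hint.mono (by fun_prop) (.of_forall fun x => ?_)
  rw [Real.norm_of_nonneg (mul_nonneg (hf0 x) (Real.exp_nonneg _)),
    Real.norm_of_nonneg (mul_nonneg (hf0 x) (Real.exp_nonneg _))]
  exact mul_le_mul_of_nonneg_left
    (Real.exp_le_exp.mpr ((le_abs_self _).trans (abs_mul_le_mul_abs_of_abs_le ht))) (hf0 x)

lemma tendsto_integral_abs_sub_mul_exp (hf : AEStronglyMeasurable f μ)
    (hu : AEStronglyMeasurable u μ) (hf0 : 0 ≤ f)
    (hint : Integrable (fun x => f x * Real.exp (ε * |u x|)) μ) :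
    Tendsto (fun t => ∫ x, |f x - f x * Real.exp (u x * t)| ∂μ)
      (𝓝[Set.Icc (-ε) ε] 0) (𝓝 0) := by
  have hbound : ∀ᶠ t in 𝓝[Set.Icc (-ε) ε] 0, ∀ᵐ x ∂μ,
      ‖|f x - f x * Real.exp (u x * t)|‖ ≤ f x * Real.exp (ε * |u x|) := by
    filter_upwards [self_mem_nhdsWithin] with t ht
    refine .of_forall fun x => ?_
    rw [norm_abs_eq_norm, Real.norm_eq_abs, ← mul_one_sub, abs_mul, abs_of_nonneg (hf0 x)]
    exact mul_le_mul_of_nonneg_left ((Real.abs_one_sub_exp_le_exp_abs _).trans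
      (Real.exp_le_exp.mpr (abs_mul_le_mul_abs_of_abs_le (abs_le.mpr ht)))) (hf0 x)
  have hlim : ∀ᵐ x ∂μ, Tendsto (fun t => |f x - f x * Real.exp (u x * t)|)
      (𝓝[Set.Icc (-ε) ε] 0) (𝓝 0) := .of_forall fun x =>
    ((by fun_prop : Continuous fun t => |f x - f x * Real.exp (u x * t)|).tendsto' 0 0
      (by simp)).mono_left nhdsWithin_le_nhds
  simpa using tendsto_integral_filter_of_dominated_convergence _
    (.of_forall fun t => by fun_prop) hbound hint hlim

lemma iSup_abs_setIntegral_sub_tilted_le {ι : Type*} (hf : AEStronglyMeasurable f μ)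
    (hu : AEStronglyMeasurable u μ) (hf0 : 0 ≤ f) (hf1 : ∫ x, f x ∂μ = 1)
    (hint : Integrable (fun x => f x * Real.exp (ε * |u x|)) μ) (ht : |t| ≤ ε)
    (s : ι → Set α) :
    ⨆ i, |∫ x in s i, f x ∂μ - ∫ x in s i, f x * Real.exp (u x * t) /
        (∫ y, f y * Real.exp (u y * t) ∂μ) ∂μ| ≤
      2 * ∫ x, |f x - f x * Real.exp (u x * t)| ∂μ := by
  have hfi : Integrable f μ := .of_integral_ne_zero (hf1 ▸ one_ne_zero)
  have hg := integrable_mul_exp_mul hf hu hf0 hint ht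
  exact (iSup_abs_setIntegral_sub_le_integral_abs_sub hfi (hg.div_const _) s).trans
    (integral_abs_sub_div_integral_le hfi hg (fun x => mul_nonneg (hf0 x) (Real.exp_nonneg _))
      hf1 (integral_mul_exp_pos hf0 (hf1 ▸ one_pos) hg))

end Tilting

theorem kolmogorov_distance_tendsto_zero_general (pr h : ℝ → ℝ)
    (hprm : Measurable pr) (hhm : Measurable h)
    (hpr : ∀ θ, 0 ≤ pr θ) (hpr1 : ∫ θ, pr θ = 1)
    (ε : ℝ)
    (hint : Integrable (fun θ => pr θ * Real.exp (ε * |h θ|))) :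
    Filter.Tendsto
      (fun t : ℝ => ⨆ τ : ℝ,
        |(∫ θ in Set.Iic τ, pr θ) -
          ∫ θ in Set.Iic τ, pr θ * Real.exp (h θ * t) /
            (∫ θ', pr θ' * Real.exp (h θ' * t))|)
      (nhdsWithin 0 (Set.Icc (-ε) ε)) (nhds 0) := by
  refine squeeze_zero' (.of_forall fun t => Real.iSup_nonneg fun τ => abs_nonneg _) ?_
    (by simpa using (tendsto_integral_abs_sub_mul_exp hprm.aestronglyMeasurable
      hhm.aestronglyMeasurable hpr hint).const_mul 2)
  filter_upwards [self_mem_nhdsWithin] with t ht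
  exact iSup_abs_setIntegral_sub_tilted_le hprm.aestronglyMeasurable hhm.aestronglyMeasurable
    hpr hpr1 hint (abs_le.mpr ht) Set.Iic

theorem kolmogorov_distance_tendsto_zero (pr h : ℝ → ℝ)
    (hprm : Measurable pr) (hhm : Measurable h)
    (hpr : ∀ θ, 0 ≤ pr θ) (hpr1 : ∫ θ, pr θ = 1)
    (ε : ℝ) (hε : 0 < ε)
    (hint : Integrable (fun θ => pr θ * Real.exp (ε * |h θ|))) :
    Filter.Tendsto
      (fun t : ℝ => ⨆ τ : ℝ,
        |(∫ θ in Set.Iic τ, pr θ) -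
          ∫ θ in Set.Iic τ, pr θ * Real.exp (h θ * t) /
            (∫ θ', pr θ' * Real.exp (h θ' * t))|)
      (nhdsWithin 0 (Set.Icc (-ε) ε)) (nhds 0) :=
  kolmogorov_distance_tendsto_zero_general pr h hprm hhm hpr hpr1 ε hint
end
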